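/- arXiv:2412.05196 — 3 statements merged into one kernel-verified Lean document; each statement's English description precedes it below -/
import Mathlib

section
/- Assume the policy is proper and π(n) > 0 for every node n, and let θ ≥ 1 be a real number. Let N_θ = {n : Λ(n) ≤ θ}, which is a nonempty finite set, and let B = (1/|N_θ|)·Σ_{n ∈ N_θ} |C(n)| be the average branching factor of N_θ. Then |N_θ| > (θ − 1)/B. -/
/-- A rooted tree: a parent map with a root that every node reaches after finitely
many applications of the parent map. -/
structure ParentTree (N : Type*) where
  root : N
  par : N → N
  par_root : par root = root
  reaches_root : ∀ n : N, ∃ k : ℕ, par^[k] n = root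

namespace ParentTree

variable {N : Type*}

/-- `t.anc n m` means `n` is an ancestor of `m` (possibly `n = m`). -/
def anc (t : ParentTree N) (n m : N) : Prop := ∃ k : ℕ, t.par^[k] m = n

/-- `t.sanc n m` means `n` is a strict ancestor of `m`. -/
def sanc (t : ParentTree N) (n m : N) : Prop := t.anc n m ∧ n ≠ m

/-- The set of children of a node. -/
def children (t : ParentTree N) (n : N) : Set N := {m | m ≠ t.root ∧ t.par m = n}

/-- The depth of a node: the least `k` with `par^[k] n = root`. -/
noncomputable def depth (t : ParentTree N) (n : N) : ℕ := sInf {k : ℕ | t.par^[k] n = t.root}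

/-- The distance from an ancestor `n` to `m`: the least `k` with `par^[k] m = n`. -/
noncomputable def dist (t : ParentTree N) (n m : N) : ℕ := sInf {k : ℕ | t.par^[k] m = n}

end ParentTree

/-- A policy: conditional probabilities `π(m | par m)` on nodes, summing to at most 1
over the children of any node. -/
structure Policy {N : Type*} (t : ParentTree N) where
  cond : N → ℝ
  cond_nonneg : ∀ m : N, 0 ≤ cond m
  cond_le_one : ∀ m : N, cond m ≤ 1
  sum_le_one : ∀ (n : N) (s : Finset N), ↑s ⊆ t.children n → ∑ m ∈ s, cond m ≤ 1

namespace Policy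

variable {N : Type*} {t : ParentTree N}

/-- The path probability `π(n)`: the product of the conditional probabilities along the
path from the root to `n` (so `π(root) = 1` and `π(m) = π(m | par m)·π(par m)`). -/
noncomputable def pathProb (P : Policy t) (n : N) : ℝ :=
  ∏ k ∈ Finset.range (t.depth n), P.cond (t.par^[k] n)

end Policy

namespace Policy

/-- The slenderness cost function `Λ(n) = Σ_{n̄ ⪯ n} 1/π(n̄)`, summing over all ancestors
of `n` including `n` itself. -/
noncomputable def slend {N : Type*} {t : ParentTree N} (P : Policy t) (n : N) : ℝ :=
  ∑ k ∈ Finset.range (t.depth n + 1), (P.pathProb (t.par^[k] n))⁻¹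

end Policy

namespace ParentTree

variable {N : Type*}

variable (t : ParentTree N)

lemma depth_spec (n : N) : t.par^[t.depth n] n = t.root :=
  Nat.sInf_mem (t.reaches_root n)

lemma depth_root : t.depth t.root = 0 :=
  Nat.sInf_eq_zero.2 (Or.inl rfl)

lemma depth_eq_zero {n : N} (h : t.depth n = 0) : n = t.root := by
  have := t.depth_spec n; rwa [h] at this

lemma depth_par {n : N} (h : n ≠ t.root) : t.depth (t.par n) + 1 = t.depth n := by
  have h1 : t.depth n ≤ t.depth (t.par n) + 1 := by
    apply Nat.sInf_le
    show t.par^[t.depth (t.par n) + 1] n = t.root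
    rw [Function.iterate_succ_apply]
    exact t.depth_spec (t.par n)
  have h0 : t.depth n ≠ 0 := fun hz => h (t.depth_eq_zero hz)
  have h2 : t.depth (t.par n) ≤ t.depth n - 1 := by
    apply Nat.sInf_le
    show t.par^[t.depth n - 1] (t.par n) = t.root
    rw [← Function.iterate_succ_apply, Nat.succ_eq_add_one, Nat.sub_add_cancel (Nat.one_le_iff_ne_zero.2 h0)]
    exact t.depth_spec n
  omega

lemma depth_iterate_add {n : N} {k : ℕ} (hk : k ≤ t.depth n) :
    t.depth (t.par^[k] n) + k = t.depth n := by
  induction k with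
  | zero => simp
  | succ j ih =>
    have hj : j ≤ t.depth n := by omega
    have hne : t.par^[j] n ≠ t.root := by
      intro hr
      have := ih hj
      rw [hr, t.depth_root] at this
      omega
    have := t.depth_par hne
    rw [Function.iterate_succ_apply']
    omega

lemma iterate_injOn {n : N} {j k : ℕ} (hj : j ≤ t.depth n) (hk : k ≤ t.depth n)
    (h : t.par^[j] n = t.par^[k] n) : j = k := by
  have h1 := t.depth_iterate_add hj
  have h2 := t.depth_iterate_add hk
  rw [h] at h1; omega

lemma iterate_eq_root_of_le {n : N} {k : ℕ} (hk : t.depth n ≤ k) :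
    t.par^[k] n = t.root := by
  have : t.par^[k] n = t.par^[k - t.depth n] (t.par^[t.depth n] n) := by
    rw [← Function.iterate_add_apply]
    congr 1; omega
  rw [this, t.depth_spec]
  induction (k - t.depth n) with
  | zero => rfl
  | succ j ih => rw [Function.iterate_succ_apply', ih, t.par_root]

/-- the finite set of nodes of depth at most D is finite -/
lemma finite_depth_le (hfin : ∀ n : N, (t.children n).Finite) (D : ℕ) :
    {n : N | t.depth n ≤ D}.Finite := by
  induction D with
  | zero =>
    apply Set.Finite.subset (Set.finite_singleton t.root)
    intro n hn
    exact t.depth_eq_zero (Nat.le_zero.1 hn)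
  | succ D ih =>
    have : {n : N | t.depth n ≤ D + 1} ⊆
        {t.root} ∪ ⋃ m ∈ {n : N | t.depth n ≤ D}, t.children m := by
      intro n hn
      by_cases hr : n = t.root
      · exact Or.inl hr
      · right
        refine Set.mem_biUnion ?_ ⟨hr, rfl⟩
        have := t.depth_par hr
        simp only [Set.mem_setOf_eq] at hn ⊢
        omega
    exact Set.Finite.subset ((Set.finite_singleton _).union (ih.biUnion fun m _ => hfin m)) this

end ParentTree


namespace Policy

variable {N : Type*} {t : ParentTree N}

variable (P : Policy t)

lemma pathProb_root : P.pathProb t.root = 1 := by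
  simp [pathProb, t.depth_root]

lemma pathProb_ne_root {n : N} (h : n ≠ t.root) :
    P.pathProb n = P.cond n * P.pathProb (t.par n) := by
  have hd := t.depth_par h
  rw [pathProb, ← hd, Finset.prod_range_succ']
  simp only [Function.iterate_succ_apply, Function.iterate_zero_apply]
  rw [mul_comm]
  rfl

lemma pathProb_le_one (n : N) : P.pathProb n ≤ 1 :=
  Finset.prod_le_one (fun i _ => P.cond_nonneg _) (fun i _ => P.cond_le_one _)

lemma slend_root : P.slend t.root = 1 := by
  simp [slend, t.depth_root, P.pathProb_root]

lemma slend_ne_root {n : N} (h : n ≠ t.root) :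
    P.slend n = (P.pathProb n)⁻¹ + P.slend (t.par n) := by
  have hd := t.depth_par h
  rw [slend, ← hd, Finset.sum_range_succ']
  simp only [Function.iterate_succ_apply, Function.iterate_zero_apply]
  rw [add_comm]
  rfl

variable (hpos : ∀ n : N, 0 < P.pathProb n)
include hpos

lemma one_le_inv_pathProb (n : N) : 1 ≤ (P.pathProb n)⁻¹ :=
  (one_le_inv₀ (hpos n)).2 (P.pathProb_le_one n)

lemma depth_lt_slend (n : N) : (t.depth n : ℝ) + 1 ≤ P.slend n := by
  rw [slend]
  calc ((t.depth n : ℝ) + 1) = ∑ _k ∈ Finset.range (t.depth n + 1), (1 : ℝ) := by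
        simp
    _ ≤ _ := Finset.sum_le_sum fun k _ => P.one_le_inv_pathProb hpos _

lemma slend_par_le {n : N} (h : n ≠ t.root) : P.slend (t.par n) ≤ P.slend n := by
  rw [P.slend_ne_root h]
  have := P.one_le_inv_pathProb hpos n
  linarith

lemma slend_iterate_le (n : N) (k : ℕ) : P.slend (t.par^[k] n) ≤ P.slend n := by
  induction k with
  | zero => simp
  | succ j ih =>
    rw [Function.iterate_succ_apply']
    by_cases hr : t.par^[j] n = t.root
    · rw [hr, t.par_root, ← hr]; exact ih
    · exact le_trans (P.slend_par_le hpos hr) ih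

end Policy


open scoped Classical
section Exit

variable {N : Type*} (t : ParentTree N) (hfin : ∀ n : N, (t.children n).Finite)
  (P : Policy t) (hpos : ∀ n : N, 0 < P.pathProb n)
  (hproper : ∀ n : N, ∑ m ∈ (hfin n).toFinset, P.cond m = 1)

lemma mem_Cn {m n : N} : m ∈ (hfin n).toFinset ↔ m ≠ t.root ∧ t.par m = n := by
  rw [Set.Finite.mem_toFinset]; rfl

lemma Cn_disjoint {n₁ n₂ : N} (h : n₁ ≠ n₂) :
    Disjoint (hfin n₁).toFinset (hfin n₂).toFinset := by
  rw [Finset.disjoint_left]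
  intro m h1 h2
  rw [mem_Cn] at h1 h2
  exact h (h1.2 ▸ h2.2)

lemma part_lemma (U : Finset N) (a : N) (ha : a ∈ U)
    (hanc : ∀ n ∈ U, ∃ k ≤ t.depth n, t.par^[k] n = a)
    (hcl : ∀ n ∈ U, n ≠ a → t.par n ∈ U) :
    (U.biUnion fun n => (hfin n).toFinset) ∩ U = U.erase a := by
  ext m
  simp only [Finset.mem_inter, Finset.mem_biUnion, Finset.mem_erase]
  constructor
  · rintro ⟨⟨n, hn, hm⟩, hmU⟩
    rw [mem_Cn] at hm
    refine ⟨?_, hmU⟩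
    rintro rfl
    -- m = a, par a ∈ U, get contradiction via depth
    have hpar : t.par m ∈ U := hm.2 ▸ hn
    obtain ⟨k, hk, hka⟩ := hanc _ hpar
    have h1 := t.depth_iterate_add hk
    have h2 := t.depth_par hm.1
    rw [hka] at h1
    omega
  · rintro ⟨hma, hmU⟩
    have hmroot : m ≠ t.root := by
      rintro rfl
      obtain ⟨k, hk, hka⟩ := hanc _ hmU
      rw [t.depth_root] at hk
      interval_cases k
      exact hma (by simpa using hka)
    exact ⟨⟨t.par m, hcl _ hmU hma, (mem_Cn t hfin).2 ⟨hmroot, rfl⟩⟩, hmU⟩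

include hproper in
lemma exit_lemma (U : Finset N) (a : N) (ha : a ∈ U)
    (hanc : ∀ n ∈ U, ∃ k ≤ t.depth n, t.par^[k] n = a)
    (hcl : ∀ n ∈ U, n ≠ a → t.par n ∈ U) :
    ∑ m ∈ (U.biUnion fun n => (hfin n).toFinset) \ U, P.pathProb m = P.pathProb a := by
  have step1 : ∑ n ∈ U, P.pathProb n
      = ∑ m ∈ U.biUnion fun n => (hfin n).toFinset, P.pathProb m := by
    rw [Finset.sum_biUnion (fun n₁ _ n₂ _ h => Cn_disjoint t hfin h)]
    refine Finset.sum_congr rfl fun n _ => ?_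
    have : ∀ m ∈ (hfin n).toFinset, P.pathProb m = P.cond m * P.pathProb n := by
      intro m hm
      rw [mem_Cn] at hm
      rw [P.pathProb_ne_root hm.1, hm.2]
    rw [Finset.sum_congr rfl this, ← Finset.sum_mul, hproper n, one_mul]
  have step2 : ∑ m ∈ U.biUnion fun n => (hfin n).toFinset, P.pathProb m
      = ∑ m ∈ U.erase a, P.pathProb m
        + ∑ m ∈ (U.biUnion fun n => (hfin n).toFinset) \ U, P.pathProb m := by
    rw [← part_lemma t hfin U a ha hanc hcl, Finset.sum_inter_add_sum_sdiff]
  have step3 : ∑ m ∈ U.erase a, P.pathProb m + P.pathProb a = ∑ n ∈ U, P.pathProb n :=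
    Finset.sum_erase_add U _ ha
  linarith

end Exit

open scoped Classical


/-- for a proper policy with positive path probabilities and `θ ≥ 1`, the set
`N_θ = {n : Λ(n) ≤ θ}` is a nonempty finite set and, with `B` its average branching
factor, `|N_θ| > (θ − 1)/B`. -/
theorem stmt3 {N : Type*} (t : ParentTree N) (hfin : ∀ n : N, (t.children n).Finite)
    (P : Policy t) (hpos : ∀ n : N, 0 < P.pathProb n)
    (hproper : ∀ n : N, ∑ m ∈ (hfin n).toFinset, P.cond m = 1)
    (θ : ℝ) (hθ : 1 ≤ θ) :
    ∃ hf : {n : N | P.slend n ≤ θ}.Finite,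
      {n : N | P.slend n ≤ θ}.Nonempty ∧
      (θ - 1) /
          ((∑ n ∈ hf.toFinset, ((t.children n).ncard : ℝ)) / (hf.toFinset.card : ℝ)) <
        (hf.toFinset.card : ℝ) := by
  have hf : {n : N | P.slend n ≤ θ}.Finite := by
    apply (t.finite_depth_le hfin ⌊θ⌋₊).subset
    intro n hn
    have h1 := P.depth_lt_slend hpos n
    have h2 : (t.depth n : ℝ) ≤ θ := by
      simp only [Set.mem_setOf_eq] at hn; linarith
    exact Nat.le_floor h2
  refine ⟨hf, ?_, ?_⟩
  have hrootmem : t.root ∈ {n : N | P.slend n ≤ θ} := by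
    simp only [Set.mem_setOf_eq, P.slend_root]; exact hθ
  · exact ⟨t.root, hrootmem⟩
  set T := hf.toFinset with hT
  have hmemT : ∀ n, n ∈ T ↔ P.slend n ≤ θ := fun n => Set.Finite.mem_toFinset hf
  have hrootT : t.root ∈ T := (hmemT _).2 (by rw [P.slend_root]; exact hθ)
  set Cn : N → Finset N := fun n => (hfin n).toFinset with hCn
  set D := (T.biUnion Cn) \ T with hD
  -- T is closed under iterated parents
  have hTanc : ∀ n ∈ T, ∀ k, t.par^[k] n ∈ T := fun n hn k =>
    (hmemT _).2 (le_trans (P.slend_iterate_le hpos n k) ((hmemT n).1 hn))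
  -- parents of D members are in T
  have hDpar : ∀ m ∈ D, m ≠ t.root ∧ t.par m ∈ T := by
    intro m hm
    rw [hD, Finset.mem_sdiff, Finset.mem_biUnion] at hm
    obtain ⟨⟨n, hn, hmn⟩, _⟩ := hm
    rw [mem_Cn] at hmn
    exact ⟨hmn.1, hmn.2 ▸ hn⟩
  have hexit1 : ∑ m ∈ D, P.pathProb m = 1 := by
    have := exit_lemma t hfin P hproper T t.root hrootT
      (fun n _ => ⟨t.depth n, le_refl _, t.depth_spec n⟩)
      (fun n hn _ => by
        have := hTanc n hn 1
        simpa using this)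
    rw [this, P.pathProb_root]
  have hDne : D.Nonempty := by
    rcases D.eq_empty_or_nonempty with h | h
    · rw [h, Finset.sum_empty] at hexit1; norm_num at hexit1
    · exact h
  have hDθ : ∀ m ∈ D, θ < P.slend m := by
    intro m hm
    rw [hD, Finset.mem_sdiff] at hm
    have := hm.2
    rw [hmemT] at this
    linarith [not_le.1 this]
  -- ancestor finsets
  set ancF : N → Finset N := fun m =>
    (Finset.range (t.depth m + 1)).image (fun k => t.par^[k] m) with hancF
  have hmem_ancF : ∀ a m, a ∈ ancF m ↔ ∃ k ≤ t.depth m, t.par^[k] m = a := by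
    intro a m
    simp [hancF, Nat.lt_succ_iff]
  have hslend_eq : ∀ m, P.slend m = ∑ a ∈ ancF m, (P.pathProb a)⁻¹ := by
    intro m
    rw [hancF]
    rw [Finset.sum_image (fun j hj k hk h => t.iterate_injOn
      (Nat.lt_succ_iff.1 (Finset.mem_range.1 hj)) (Nat.lt_succ_iff.1 (Finset.mem_range.1 hk)) h)]
    rfl
  have hancF_sub : ∀ m ∈ D, ancF m ⊆ T ∪ D := by
    intro m hm a haf
    obtain ⟨k, hk, rfl⟩ := (hmem_ancF _ m).1 haf
    rcases Nat.eq_zero_or_pos k with rfl | hkpos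
    · simpa using Finset.mem_union_right T hm
    · apply Finset.mem_union_left
      have : t.par^[k] m = t.par^[k-1] (t.par m) := by
        rw [← Function.iterate_succ_apply]
        congr 1; omega
      rw [this]
      exact hTanc _ (hDpar m hm).2 _
  -- the weight bound:  ∑_{m ∈ D, a ⪯ m} π m ≤ π a  for a ∈ T ∪ D
  have hweight : ∀ a ∈ T ∪ D, ∑ m ∈ D.filter (fun m => a ∈ ancF m), P.pathProb m
      ≤ P.pathProb a := by
    intro a ha
    rcases Finset.mem_union.1 ha with haT | haD
    · -- a ∈ T : use exit lemma on the subtree of T above a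
      set Ua := T.filter (fun n => ∃ k ≤ t.depth n, t.par^[k] n = a) with hUa
      have haUa : a ∈ Ua := Finset.mem_filter.2 ⟨haT, 0, Nat.zero_le _, rfl⟩
      have hUanc : ∀ n ∈ Ua, ∃ k ≤ t.depth n, t.par^[k] n = a := fun n hn =>
        (Finset.mem_filter.1 hn).2
      have hne_root : ∀ n ∈ Ua, n ≠ a → n ≠ t.root := by
        intro n hn hna hr
        obtain ⟨k, hk, hka⟩ := hUanc n hn
        subst hr
        rw [t.depth_root] at hk
        interval_cases k
        exact hna (by simpa using hka)
      have hshift : ∀ n ∈ Ua, n ≠ a → ∃ k ≤ t.depth (t.par n), t.par^[k] (t.par n) = a := by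
        intro n hn hna
        obtain ⟨k, hk, hka⟩ := hUanc n hn
        have hk0 : k ≠ 0 := by rintro rfl; exact hna (by simpa using hka)
        have hdp := t.depth_par (hne_root n hn hna)
        have hrw : t.par^[k] n = t.par^[k-1] (t.par n) := by
          rw [← Function.iterate_succ_apply]
          congr 1; omega
        rw [hrw] at hka
        exact ⟨k - 1, by omega, hka⟩
      have hUcl : ∀ n ∈ Ua, n ≠ a → t.par n ∈ Ua := by
        intro n hn hna
        refine Finset.mem_filter.2 ⟨?_, hshift n hn hna⟩
        have := hTanc n (Finset.mem_filter.1 hn).1 1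
        simpa using this
      have hexit2 := exit_lemma t hfin P hproper Ua a haUa hUanc hUcl
      rw [← hexit2]
      apply Finset.sum_le_sum_of_subset_of_nonneg
      · intro m hm
        rw [Finset.mem_filter] at hm
        obtain ⟨hmD, hmanc⟩ := hm
        obtain ⟨hmroot, hmparT⟩ := hDpar m hmD
        have hmnotT : m ∉ T := (Finset.mem_sdiff.1 hmD).2
        rw [Finset.mem_sdiff]
        constructor
        · rw [Finset.mem_biUnion]
          refine ⟨t.par m, ?_, (mem_Cn t hfin).2 ⟨hmroot, rfl⟩⟩
          refine Finset.mem_filter.2 ⟨hmparT, ?_⟩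
          -- a ⪯ par m since a ⪯ m and a ≠ m
          obtain ⟨k, hk, hka⟩ := (hmem_ancF a m).1 hmanc
          have hk0 : k ≠ 0 := by
            rintro rfl
            simp only [Function.iterate_zero_apply] at hka
            exact hmnotT (hka ▸ haT)
          have hdp := t.depth_par hmroot
          have hrw : t.par^[k] m = t.par^[k-1] (t.par m) := by
            rw [← Function.iterate_succ_apply]
            congr 1; omega
          rw [hrw] at hka
          exact ⟨k - 1, by omega, hka⟩
        · intro hmUa
          exact hmnotT (Finset.mem_filter.1 hmUa).1
      · intro m _ _
        exact le_of_lt (hpos m)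
    · -- a ∈ D : the filter is exactly {a}
      have : D.filter (fun m => a ∈ ancF m) = {a} := by
        ext m
        rw [Finset.mem_filter, Finset.mem_singleton]
        constructor
        · rintro ⟨hmD, hmanc⟩
          by_contra hma
          obtain ⟨k, hk, hka⟩ := (hmem_ancF a m).1 hmanc
          have hk0 : k ≠ 0 := by
            rintro rfl
            exact hma (by simpa using hka)
          have : t.par^[k] m = t.par^[k-1] (t.par m) := by
            rw [← Function.iterate_succ_apply]
            congr 1; omega
          rw [this] at hka
          have haT : a ∈ T := hka ▸ hTanc _ (hDpar m hmD).2 (k-1)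
          exact (Finset.mem_sdiff.1 haD).2 haT
        · rintro rfl
          exact ⟨haD, (hmem_ancF _ _).2 ⟨0, Nat.zero_le _, rfl⟩⟩
      rw [this, Finset.sum_singleton]
  -- the double-counting bound : θ < |T| + |D|
  have hkey : ∑ m ∈ D, P.pathProb m * P.slend m ≤ (T.card : ℝ) + (D.card : ℝ) := by
    have h1 : ∀ m ∈ D, P.pathProb m * P.slend m
        = ∑ a ∈ T ∪ D, (if a ∈ ancF m then P.pathProb m * (P.pathProb a)⁻¹ else 0) := by
      intro m hm
      rw [Finset.sum_ite_mem, Finset.inter_eq_right.2 (hancF_sub m hm), hslend_eq,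
        Finset.mul_sum]
    rw [Finset.sum_congr rfl h1, Finset.sum_comm]
    have hTD : Disjoint T D := Finset.disjoint_sdiff
    have h2 : ∀ a ∈ T ∪ D,
        ∑ m ∈ D, (if a ∈ ancF m then P.pathProb m * (P.pathProb a)⁻¹ else 0) ≤ 1 := by
      intro a ha
      have : ∑ m ∈ D, (if a ∈ ancF m then P.pathProb m * (P.pathProb a)⁻¹ else 0)
          = (∑ m ∈ D.filter (fun m => a ∈ ancF m), P.pathProb m) * (P.pathProb a)⁻¹ := by
        rw [Finset.sum_filter, Finset.sum_mul]
        refine Finset.sum_congr rfl fun m _ => ?_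
        split <;> simp
      rw [this]
      calc (∑ m ∈ D.filter (fun m => a ∈ ancF m), P.pathProb m) * (P.pathProb a)⁻¹
          ≤ P.pathProb a * (P.pathProb a)⁻¹ :=
            mul_le_mul_of_nonneg_right (hweight a ha) (le_of_lt (inv_pos.2 (hpos a)))
        _ = 1 := mul_inv_cancel₀ (ne_of_gt (hpos a))
    calc ∑ a ∈ T ∪ D, ∑ m ∈ D, (if a ∈ ancF m then P.pathProb m * (P.pathProb a)⁻¹ else 0)
        ≤ ∑ a ∈ T ∪ D, (1 : ℝ) := Finset.sum_le_sum h2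
      _ = ((T ∪ D).card : ℝ) := by rw [Finset.sum_const, nsmul_eq_mul, mul_one]
      _ = (T.card : ℝ) + (D.card : ℝ) := by
          rw [Finset.card_union_of_disjoint hTD]; push_cast; ring
  have hθlt : θ < (T.card : ℝ) + (D.card : ℝ) := by
    have heq : θ = ∑ m ∈ D, θ * P.pathProb m := by
      rw [← Finset.mul_sum, hexit1, mul_one]
    have hlt : ∑ m ∈ D, θ * P.pathProb m < ∑ m ∈ D, P.pathProb m * P.slend m := by
      apply Finset.sum_lt_sum_of_nonempty hDne
      intro m hm
      rw [mul_comm]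
      exact mul_lt_mul_of_pos_left (hDθ m hm) (hpos m)
    linarith
  -- cardinalities
  have hcard_biU : (T.biUnion Cn).card = ∑ n ∈ T, (Cn n).card :=
    Finset.card_biUnion (fun n₁ _ n₂ _ h => Cn_disjoint t hfin h)
  have hpart : (T.biUnion Cn) ∩ T = T.erase t.root :=
    part_lemma t hfin T t.root hrootT
      (fun n _ => ⟨t.depth n, le_refl _, t.depth_spec n⟩)
      (fun n hn _ => by have := hTanc n hn 1; simpa using this)
  have hcard_split : (T.biUnion Cn).card + 1 = T.card + D.card := by
    have h1 : ((T.biUnion Cn) ∩ T).card + ((T.biUnion Cn) \ T).card = (T.biUnion Cn).card :=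
      Finset.card_inter_add_card_sdiff _ _
    rw [hpart, Finset.card_erase_of_mem hrootT] at h1
    have hTpos : 1 ≤ T.card := Finset.card_pos.2 ⟨t.root, hrootT⟩
    rw [hD]
    omega
  have hncard : ∀ n, ((t.children n).ncard : ℝ) = ((Cn n).card : ℝ) := by
    intro n
    rw [Set.ncard_eq_toFinset_card _ (hfin n)]
  have hSsum : ∑ n ∈ T, ((t.children n).ncard : ℝ)
      = (T.card : ℝ) - 1 + (D.card : ℝ) := by
    have : ∑ n ∈ T, ((t.children n).ncard : ℝ) = ((T.biUnion Cn).card : ℝ) := by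
      rw [hcard_biU]
      push_cast
      exact Finset.sum_congr rfl fun n _ => hncard n
    rw [this]
    have hc : ((T.biUnion Cn).card : ℝ) + 1 = (T.card : ℝ) + (D.card : ℝ) := by
      exact_mod_cast hcard_split
    linarith
  -- children are nonempty, so D.card ≥ 1 and the sum is positive
  have hTpos : (1 : ℝ) ≤ (T.card : ℝ) := by
    exact_mod_cast Finset.card_pos.2 ⟨t.root, hrootT⟩
  have hDpos : (1 : ℝ) ≤ (D.card : ℝ) := by
    exact_mod_cast Finset.card_pos.2 hDne
  have hSpos : 0 < ∑ n ∈ T, ((t.children n).ncard : ℝ) := by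
    rw [hSsum]; linarith
  have hmain : θ - 1 < ∑ n ∈ T, ((t.children n).ncard : ℝ) := by
    rw [hSsum]; linarith
  have hcpos : (0 : ℝ) < (T.card : ℝ) := by linarith
  have hBpos : 0 < (∑ n ∈ T, ((t.children n).ncard : ℝ)) / (T.card : ℝ) :=
    div_pos hSpos hcpos
  rw [div_lt_iff₀ hBpos]
  have hcancel : (T.card : ℝ) * ((∑ n ∈ T, ((t.children n).ncard : ℝ)) / (T.card : ℝ))
      = ∑ n ∈ T, ((t.children n).ncard : ℝ) := by
    field_simp
  linarith
end

section
/- Assume the policy is proper and π(n) > 0 for every node n, and let θ ≥ 1 be a real number. Let N_θ = {n : Λ(n) ≤ θ} and N_θ^+ = N_θ ∪ ⋃_{n ∈ N_θ} C(n). Then |N_θ| ≤ θ < |N_θ^+|. -/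
namespace Slend
variable {N : Type*} (t : ParentTree N)

lemma depth_spec (n : N) : t.par^[t.depth n] n = t.root := Nat.sInf_mem (t.reaches_root n)
lemma depth_root : t.depth t.root = 0 :=
  Nat.eq_zero_of_le_zero (Nat.sInf_le (show t.par^[0] t.root = t.root from rfl))
lemma eq_root_of_depth_eq_zero {n : N} (h : t.depth n = 0) : n = t.root := by
  have := depth_spec t n; rwa [h, Function.iterate_zero_apply] at this
lemma depth_par {m : N} (h : m ≠ t.root) : t.depth m = t.depth (t.par m) + 1 := by
  have h1 : t.depth m ≤ t.depth (t.par m) + 1 := by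
    apply Nat.sInf_le
    show t.par^[t.depth (t.par m) + 1] m = t.root
    rw [Function.iterate_succ_apply]; exact depth_spec t (t.par m)
  have h0 : t.depth m ≠ 0 := fun h0 => h (eq_root_of_depth_eq_zero t h0)
  obtain ⟨d, hd⟩ := Nat.exists_eq_succ_of_ne_zero h0
  have h2 : t.depth (t.par m) ≤ d := by
    apply Nat.sInf_le
    show t.par^[d] (t.par m) = t.root
    rw [← Function.iterate_succ_apply, ← hd]; exact depth_spec t m
  omega

lemma depth_finite (hfin : ∀ n : N, (t.children n).Finite) (D : ℕ) :
    {n : N | t.depth n ≤ D}.Finite := by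
  induction D with
  | zero =>
    apply Set.Finite.subset (Set.finite_singleton t.root)
    intro n hn
    exact eq_root_of_depth_eq_zero t (Nat.le_zero.mp hn)
  | succ D ih =>
    apply Set.Finite.subset (ih.union (Set.Finite.biUnion ih (fun n _ => hfin n)))
    intro m hm
    by_cases hr : m = t.root
    · exact Or.inl (by simp [hr, Set.mem_setOf_eq, depth_root])
    · have hd := depth_par t hr
      have hm' : t.depth m ≤ D + 1 := hm
      right
      exact Set.mem_biUnion (show t.depth (t.par m) ≤ D by omega) ⟨hr, rfl⟩

variable (P : Policy t)

lemma pathProb_root : P.pathProb t.root = 1 := by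
  unfold Policy.pathProb; rw [depth_root]; simp

lemma pathProb_par {m : N} (h : m ≠ t.root) :
    P.pathProb m = P.cond m * P.pathProb (t.par m) := by
  unfold Policy.pathProb
  rw [depth_par t h, Finset.prod_range_succ']
  simp only [Function.iterate_succ_apply, Function.iterate_zero_apply]
  ring

lemma pathProb_le_one (n : N) : P.pathProb n ≤ 1 :=
  Finset.prod_le_one (fun k _ => P.cond_nonneg _) (fun k _ => P.cond_le_one _)

lemma slend_root : P.slend t.root = 1 := by
  unfold Policy.slend
  rw [depth_root]
  simp [pathProb_root]

lemma slend_par {m : N} (h : m ≠ t.root) :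
    P.slend m = P.slend (t.par m) + (P.pathProb m)⁻¹ := by
  unfold Policy.slend
  rw [depth_par t h, Finset.sum_range_succ']
  simp only [Function.iterate_succ_apply, Function.iterate_zero_apply]


lemma le_slend (hpos : ∀ n : N, 0 < P.pathProb n) (n : N) :
    (t.depth n + 1 : ℝ) ≤ P.slend n := by
  unfold Policy.slend
  calc (t.depth n + 1 : ℝ) = ∑ _k ∈ Finset.range (t.depth n + 1), (1 : ℝ) := by simp
  _ ≤ _ := Finset.sum_le_sum fun k _ =>
      (one_le_inv₀ (hpos _)).mpr (pathProb_le_one t P _)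

lemma par_ne_self {n : N} (h : n ≠ t.root) : t.par n ≠ n := by
  intro he
  obtain ⟨k, hk⟩ := t.reaches_root n
  have hall : ∀ j, t.par^[j] n = n := by
    intro j; induction j with
    | zero => rfl
    | succ j ih => rw [Function.iterate_succ_apply', ih, he]
  exact h (by rw [← hk, hall])

lemma bd_finite (hfin : ∀ n : N, (t.children n).Finite) (A : Finset N) :
    {m : N | m ∉ A ∧ m ≠ t.root ∧ t.par m ∈ A}.Finite := by
  apply Set.Finite.subset (Set.Finite.biUnion A.finite_toSet (fun n _ => hfin n))
  rintro m ⟨-, hr, hp⟩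
  exact Set.mem_biUnion hp ⟨hr, rfl⟩

variable (hfin : ∀ n : N, (t.children n).Finite)

noncomputable def bd (A : Finset N) : Finset N := (bd_finite t hfin A).toFinset

lemma mem_bd {A : Finset N} {m : N} :
    m ∈ bd t hfin A ↔ m ∉ A ∧ m ≠ t.root ∧ t.par m ∈ A := by
  simp [bd, Set.Finite.mem_toFinset]

lemma children_sum (n : N) : ∑ m ∈ (hfin n).toFinset, P.pathProb m
    = (∑ m ∈ (hfin n).toFinset, P.cond m) * P.pathProb n := by
  rw [Finset.sum_mul]
  apply Finset.sum_congr rfl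
  intro m hm
  rw [Set.Finite.mem_toFinset] at hm
  rw [pathProb_par t P hm.1, hm.2]

lemma flow (hpos : ∀ n : N, 0 < P.pathProb n)
    (hproper : ∀ n : N, ∑ m ∈ (hfin n).toFinset, P.cond m = 1) :
    ∀ A : Finset N, t.root ∈ A → (∀ m ∈ A, m ≠ t.root → t.par m ∈ A) →
      (∑ m ∈ bd t hfin A, P.pathProb m = 1) ∧
      (∑ m ∈ bd t hfin A, P.pathProb m * P.slend (t.par m) = A.card) := by
  classical
  intro A
  induction A using Finset.strongInduction with
  | _ A ih =>
  intro hroot hclosed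
  by_cases hA : A = {t.root}
  · subst hA
    have hbd : bd t hfin {t.root} = (hfin t.root).toFinset := by
      ext m
      rw [mem_bd]
      simp only [Finset.mem_singleton, Set.Finite.mem_toFinset]
      constructor
      · rintro ⟨-, hr, hp⟩; exact ⟨hr, hp⟩
      · rintro ⟨hr, hp⟩; exact ⟨hr, hr, hp⟩
    constructor
    · rw [hbd, children_sum t P hfin, hproper, pathProb_root, one_mul]
    · rw [hbd, Finset.card_singleton, Nat.cast_one]
      have : ∀ m ∈ (hfin t.root).toFinset,
          P.pathProb m * P.slend (t.par m) = P.pathProb m := by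
        intro m hm
        rw [Set.Finite.mem_toFinset] at hm
        rw [hm.2, slend_root, mul_one]
      rw [Finset.sum_congr rfl this, children_sum t P hfin, hproper, pathProb_root, one_mul]
  · -- pick a maximal-depth element
    obtain ⟨n₀, hn₀A, hmax⟩ := Finset.exists_max_image A (t.depth) ⟨t.root, hroot⟩
    have hn₀r : n₀ ≠ t.root := by
      obtain ⟨x, hxA, hxr⟩ : ∃ x ∈ A, x ≠ t.root := by
        by_contra hc
        push_neg at hc
        exact hA (Finset.eq_singleton_iff_unique_mem.mpr ⟨hroot, hc⟩)
      intro he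
      have hdx : t.depth x ≤ t.depth n₀ := hmax x hxA
      rw [he, depth_root] at hdx
      exact hxr (eq_root_of_depth_eq_zero t (Nat.le_zero.mp hdx))
    set A' := A.erase n₀ with hA'
    have hssub : A' ⊂ A := Finset.erase_ssubset hn₀A
    have hrootA' : t.root ∈ A' := Finset.mem_erase.mpr ⟨Ne.symm hn₀r, hroot⟩
    have hnotchild : ∀ m ∈ A, t.par m ≠ n₀ := by
      intro m hm he
      have h1 : t.depth m ≤ t.depth n₀ := hmax m hm
      have hmr : m ≠ t.root := by
        intro hx; rw [hx, t.par_root] at he; exact hn₀r he.symm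
      have h2 := depth_par t hmr
      rw [he] at h2
      omega
    have hclosed' : ∀ m ∈ A', m ≠ t.root → t.par m ∈ A' := by
      intro m hm hr
      have hmA : m ∈ A := Finset.mem_of_mem_erase hm
      exact Finset.mem_erase.mpr ⟨hnotchild m hmA, hclosed m hmA hr⟩
    have hn₀bd : n₀ ∈ bd t hfin A' := by
      rw [mem_bd]
      refine ⟨Finset.notMem_erase n₀ A, hn₀r, Finset.mem_erase.mpr ⟨?_, hclosed n₀ hn₀A hn₀r⟩⟩
      exact par_ne_self t hn₀r
    have hchild_notA : ∀ m ∈ (hfin n₀).toFinset, m ∉ A := by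
      intro m hm hmA
      rw [Set.Finite.mem_toFinset] at hm
      exact hnotchild m hmA hm.2
    -- boundary decomposition
    have hbd : bd t hfin A = (bd t hfin A').erase n₀ ∪ (hfin n₀).toFinset := by
      ext m
      rw [Finset.mem_union, Finset.mem_erase, mem_bd, mem_bd, Set.Finite.mem_toFinset]
      constructor
      · rintro ⟨hmA, hmr, hpA⟩
        by_cases hp : t.par m = n₀
        · exact Or.inr ⟨hmr, hp⟩
        · refine Or.inl ⟨?_, fun h => hmA (Finset.mem_of_mem_erase h), hmr,
            Finset.mem_erase.mpr ⟨hp, hpA⟩⟩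
          intro he; rw [he] at hmA; exact hmA hn₀A
      · rintro (⟨hmn, hmA', hmr, hpA'⟩ | hm)
        · exact ⟨fun h => hmA' (Finset.mem_erase.mpr ⟨hmn, h⟩), hmr,
            Finset.mem_of_mem_erase hpA'⟩
        · exact ⟨hchild_notA m (Set.Finite.mem_toFinset _ |>.mpr hm), hm.1,
            hm.2 ▸ hn₀A⟩
    have hdisj : Disjoint ((bd t hfin A').erase n₀) ((hfin n₀).toFinset) := by
      rw [Finset.disjoint_right]
      intro m hm
      rw [Set.Finite.mem_toFinset] at hm
      intro hm'
      have := (mem_bd t hfin).mp (Finset.mem_of_mem_erase hm')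
      exact (Finset.mem_erase.mp this.2.2).1 hm.2
    have hsum : ∀ f : N → ℝ, ∑ m ∈ bd t hfin A, f m
        = (∑ m ∈ bd t hfin A', f m) - f n₀ + ∑ m ∈ (hfin n₀).toFinset, f m := by
      intro f
      rw [hbd, Finset.sum_union hdisj, Finset.sum_erase_eq_sub hn₀bd]
    obtain ⟨IH1, IH2⟩ := ih A' hssub hrootA' hclosed'
    have hcard : (A'.card : ℝ) + 1 = A.card := by
      rw [hA', Finset.card_erase_of_mem hn₀A]
      have : 1 ≤ A.card := Finset.card_pos.mpr ⟨n₀, hn₀A⟩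
      rw [Nat.cast_sub this]
      ring
    have hchildsum : ∑ m ∈ (hfin n₀).toFinset, P.pathProb m = P.pathProb n₀ := by
      rw [children_sum t P hfin, hproper, one_mul]
    constructor
    · rw [hsum, IH1, hchildsum]; ring
    · rw [hsum]
      have : ∑ m ∈ (hfin n₀).toFinset, P.pathProb m * P.slend (t.par m)
          = P.pathProb n₀ * P.slend n₀ := by
        rw [← hchildsum, Finset.sum_mul]
        apply Finset.sum_congr rfl
        intro m hm
        rw [Set.Finite.mem_toFinset] at hm
        rw [hm.2]
      rw [IH2, this, slend_par t P hn₀r]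
      have hp0 : P.pathProb n₀ ≠ 0 := ne_of_gt (hpos n₀)
      field_simp
      linarith [hcard]

end Slend

/-- for a proper policy with positive path probabilities and `θ ≥ 1`, with
`N_θ = {n : Λ(n) ≤ θ}` and `N_θ^+ = N_θ ∪ ⋃_{n ∈ N_θ} C(n)`, both sets are finite and
`|N_θ| ≤ θ < |N_θ^+|`. -/
theorem stmt4 {N : Type*} (t : ParentTree N) (hfin : ∀ n : N, (t.children n).Finite)
    (P : Policy t) (hpos : ∀ n : N, 0 < P.pathProb n)
    (hproper : ∀ n : N, ∑ m ∈ (hfin n).toFinset, P.cond m = 1)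
    (θ : ℝ) (hθ : 1 ≤ θ) :
    {n : N | P.slend n ≤ θ}.Finite ∧
    ({n : N | P.slend n ≤ θ} ∪ ⋃ n ∈ {n : N | P.slend n ≤ θ}, t.children n).Finite ∧
    ({n : N | P.slend n ≤ θ}.ncard : ℝ) ≤ θ ∧
    θ < (({n : N | P.slend n ≤ θ} ∪ ⋃ n ∈ {n : N | P.slend n ≤ θ}, t.children n).ncard : ℝ) := by
  classical
  set S := {n : N | P.slend n ≤ θ} with hS
  have hfinS : S.Finite := by
    apply Set.Finite.subset (Slend.depth_finite t hfin (Nat.ceil θ))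
    intro n hn
    have h0 : P.slend n ≤ θ := hn
    have h1 : (t.depth n : ℝ) + 1 ≤ θ := le_trans (Slend.le_slend t P hpos n) h0
    have h2 : (t.depth n : ℝ) < (Nat.ceil θ : ℝ) := lt_of_lt_of_le (by linarith) (Nat.le_ceil θ)
    exact le_of_lt (Nat.cast_lt.mp h2)
  have hfinSp : (S ∪ ⋃ n ∈ S, t.children n).Finite :=
    hfinS.union (Set.Finite.biUnion hfinS (fun n _ => hfin n))
  refine ⟨hfinS, hfinSp, ?_, ?_⟩
  all_goals {
  set A := hfinS.toFinset with hAdef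
  have hmemA : ∀ m, m ∈ A ↔ P.slend m ≤ θ := by
    intro m; rw [hAdef, Set.Finite.mem_toFinset]; rfl
  have hroot : t.root ∈ A := (hmemA _).mpr (by rw [Slend.slend_root]; exact hθ)
  have hclosed : ∀ m ∈ A, m ≠ t.root → t.par m ∈ A := by
    intro m hm hr
    have heq := Slend.slend_par t P hr
    have hinv : 0 < (P.pathProb m)⁻¹ := inv_pos.mpr (hpos m)
    have hm' := (hmemA m).mp hm
    exact (hmemA _).mpr (by linarith)
  obtain ⟨F1, F2⟩ := Slend.flow t P hfin hpos hproper A hroot hclosed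
  have hcardS : S.ncard = A.card := by
    rw [hAdef, Set.ncard_eq_toFinset_card S hfinS]
  have hb1 : (A.card : ℝ) ≤ θ := by
    rw [← F2]
    calc ∑ m ∈ Slend.bd t hfin A, P.pathProb m * P.slend (t.par m)
        ≤ ∑ m ∈ Slend.bd t hfin A, P.pathProb m * θ := by
          apply Finset.sum_le_sum
          intro m hm
          obtain ⟨-, -, hpA⟩ := (Slend.mem_bd t hfin).mp hm
          exact mul_le_mul_of_nonneg_left ((hmemA _).mp hpA) (le_of_lt (hpos m))
      _ = θ := by rw [← Finset.sum_mul, F1, one_mul]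
  have hbdne : (Slend.bd t hfin A).Nonempty := by
    rw [Finset.nonempty_iff_ne_empty]
    intro he; rw [he, Finset.sum_empty] at F1; norm_num at F1
  have key : ∑ m ∈ Slend.bd t hfin A, P.pathProb m * P.slend m
      = (A.card : ℝ) + ((Slend.bd t hfin A).card : ℝ) := by
    have hterm : ∀ m ∈ Slend.bd t hfin A,
        P.pathProb m * P.slend m = P.pathProb m * P.slend (t.par m) + 1 := by
      intro m hm
      obtain ⟨-, hr, -⟩ := (Slend.mem_bd t hfin).mp hm
      rw [Slend.slend_par t P hr, mul_add, mul_inv_cancel₀ (ne_of_gt (hpos m))]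
    rw [Finset.sum_congr rfl hterm, Finset.sum_add_distrib, F2, Finset.sum_const,
      nsmul_eq_mul, mul_one]
  have hlt : θ < ∑ m ∈ Slend.bd t hfin A, P.pathProb m * P.slend m := by
    have : θ * 1 < ∑ m ∈ Slend.bd t hfin A, P.pathProb m * P.slend m := by
      rw [← F1, Finset.mul_sum]
      apply Finset.sum_lt_sum_of_nonempty hbdne
      intro m hm
      obtain ⟨hmA, -, -⟩ := (Slend.mem_bd t hfin).mp hm
      have hθm : θ < P.slend m := lt_of_not_ge (fun h => hmA ((hmemA m).mpr h))
      calc θ * P.pathProb m = P.pathProb m * θ := mul_comm _ _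
        _ < P.pathProb m * P.slend m := (mul_lt_mul_iff_right₀ (hpos m)).mpr hθm
    linarith
  have hdisjAB : Disjoint A (Slend.bd t hfin A) := by
    rw [Finset.disjoint_right]
    intro m hm
    exact ((Slend.mem_bd t hfin).mp hm).1
  have hsub : (↑(A ∪ Slend.bd t hfin A) : Set N) ⊆ S ∪ ⋃ n ∈ S, t.children n := by
    intro m hm
    rw [Finset.coe_union, Set.mem_union, Finset.mem_coe, Finset.mem_coe] at hm
    rcases hm with hm | hm
    · exact Or.inl ((hmemA m).mp hm)
    · obtain ⟨-, hr, hpA⟩ := (Slend.mem_bd t hfin).mp hm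
      exact Or.inr (Set.mem_biUnion ((hmemA _).mp hpA) ⟨hr, rfl⟩)
  have hb2 : θ < ((S ∪ ⋃ n ∈ S, t.children n).ncard : ℝ) := by
    have hc : (A ∪ Slend.bd t hfin A).card = A.card + (Slend.bd t hfin A).card :=
      Finset.card_union_of_disjoint hdisjAB
    have hle : (A ∪ Slend.bd t hfin A).card ≤ (S ∪ ⋃ n ∈ S, t.children n).ncard := by
      rw [← Set.ncard_coe_finset]
      exact Set.ncard_le_ncard hsub hfinSp
    have : (A.card : ℝ) + ((Slend.bd t hfin A).card : ℝ)
        ≤ ((S ∪ ⋃ n ∈ S, t.children n).ncard : ℝ) := by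
      rw [← Nat.cast_add, ← hc]; exact_mod_cast hle
    linarith [key ▸ hlt]
  first
  | (rw [hcardS]; exact hb1)
  | exact hb2
  }
end

section
/- Suppose every node has at least one child and the number of children of a node depends only on its depth: there is a function C : ℕ → ℕ with C(k) ≥ 1 such that |C(n)| = C(d(n)) for every node n. Suppose the policy is uniform: π(m | n) = 1/|C(n)| for every node n and every child m ∈ C(n). Then for every node n, Λ(n) equals the number of nodes of depth at most d(n), i.e., Λ(n) = |{m : d(m) ≤ d(n)}|. -/
section Aux

variable {N : Type*} (t : ParentTree N)

lemma aux_iterate_root (k : ℕ) : t.par^[k] t.root = t.root := by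
  induction k with
  | zero => rfl
  | succ k ih => rw [Function.iterate_succ_apply', ih, t.par_root]

lemma aux_depth_spec (n : N) : t.par^[t.depth n] n = t.root :=
  Nat.sInf_mem (t.reaches_root n)

lemma aux_depth_root : t.depth t.root = 0 :=
  Nat.eq_zero_of_le_zero (Nat.sInf_le (by simp))

lemma aux_depth_eq_zero {n : N} : t.depth n = 0 ↔ n = t.root := by
  constructor
  · intro h
    have := aux_depth_spec t n
    rwa [h] at this
  · rintro rfl; exact aux_depth_root t

lemma aux_depth_par {n : N} (hn : n ≠ t.root) :
    t.depth n = t.depth (t.par n) + 1 := by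
  have hd0 : t.depth n ≠ 0 := fun h => hn ((aux_depth_eq_zero t).1 h)
  have h1 : t.depth (t.par n) ≤ t.depth n - 1 := by
    apply Nat.sInf_le
    show t.par^[t.depth n - 1] (t.par n) = t.root
    rw [← Function.iterate_succ_apply, Nat.succ_eq_add_one, Nat.sub_add_cancel (Nat.one_le_iff_ne_zero.2 hd0)]
    exact aux_depth_spec t n
  have h2 : t.depth n ≤ t.depth (t.par n) + 1 := by
    apply Nat.sInf_le
    show t.par^[t.depth (t.par n) + 1] n = t.root
    rw [Function.iterate_succ_apply]
    exact aux_depth_spec t (t.par n)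
  omega

lemma aux_mem_children {n : N} (hn : n ≠ t.root) : n ∈ t.children (t.par n) :=
  ⟨hn, rfl⟩

lemma aux_depth_child {n m : N} (hm : m ∈ t.children n) :
    t.depth m = t.depth n + 1 := by
  obtain ⟨hm1, hm2⟩ := hm
  rw [aux_depth_par t hm1, hm2]

lemma aux_depth_iterate {n : N} {k : ℕ} (hk : k ≤ t.depth n) :
    t.depth (t.par^[k] n) = t.depth n - k := by
  induction k with
  | zero => simp
  | succ k ih =>
    have hk' : k ≤ t.depth n := Nat.le_of_succ_le hk
    have hne : t.par^[k] n ≠ t.root := by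
      intro h
      have := (aux_depth_eq_zero t).2 h
      rw [ih hk'] at this
      omega
    have := aux_depth_par t hne
    rw [ih hk'] at this
    rw [Function.iterate_succ_apply']
    omega

lemma aux_card_depth {N : Type*} (t : ParentTree N) (hfin : ∀ n : N, (t.children n).Finite)
    (C : ℕ → ℕ) (hcard : ∀ n : N, (t.children n).ncard = C (t.depth n)) (k : ℕ) :
    {m : N | t.depth m = k}.Finite ∧
      {m : N | t.depth m = k}.ncard = ∏ j ∈ Finset.range k, C j := by
  classical
  induction k with
  | zero =>
    have hs : {m : N | t.depth m = 0} = {t.root} := by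
      ext m; simp [aux_depth_eq_zero]
    rw [hs]
    exact ⟨Set.finite_singleton _, by simp⟩
  | succ k ih =>
    have hU : {m : N | t.depth m = k + 1} =
        ↑((ih.1.toFinset).biUnion fun n => (hfin n).toFinset) := by
      ext m
      simp only [Set.mem_setOf_eq, Finset.coe_biUnion, Set.mem_iUnion, Finset.mem_coe,
        Finset.mem_biUnion, Set.Finite.mem_toFinset, Set.mem_setOf_eq]
      constructor
      · intro hm
        have hne : m ≠ t.root := by
          intro h
          rw [h, aux_depth_root] at hm; omega
        refine ⟨t.par m, ?_, aux_mem_children t hne⟩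
        have := aux_depth_par t hne
        omega
      · rintro ⟨x, hx, hmx⟩
        rw [aux_depth_child t hmx, hx]
    have hdisj : ∀ x ∈ ih.1.toFinset, ∀ y ∈ ih.1.toFinset, x ≠ y →
        Disjoint ((hfin x).toFinset) ((hfin y).toFinset) := by
      intro x _ y _ hxy
      rw [Finset.disjoint_left]
      intro a ha hay
      rw [Set.Finite.mem_toFinset] at ha hay
      exact hxy (ha.2 ▸ hay.2.symm ▸ rfl)
    constructor
    · rw [hU]; exact (Finset.finite_toSet _)
    · rw [hU, Set.ncard_coe_finset, Finset.card_biUnion hdisj]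
      have hterm : ∀ x ∈ ih.1.toFinset, ((hfin x).toFinset).card = C k := by
        intro x hx
        rw [Set.Finite.mem_toFinset] at hx
        rw [← Set.ncard_eq_toFinset_card _ (hfin x), hcard, hx]
      rw [Finset.sum_congr rfl hterm, Finset.sum_const, smul_eq_mul,
        ← Set.ncard_eq_toFinset_card _ ih.1, ih.2, Finset.prod_range_succ]

lemma aux_pathProb {N : Type*} (t : ParentTree N) (P : Policy t) (C : ℕ → ℕ)
    (hcard : ∀ n : N, (t.children n).ncard = C (t.depth n))
    (hunif : ∀ n : N, ∀ m ∈ t.children n, P.cond m = (((t.children n).ncard : ℝ))⁻¹)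
    (n : N) :
    (P.pathProb n)⁻¹ = ∏ j ∈ Finset.range (t.depth n), (C j : ℝ) := by
  have hP : P.pathProb n = ∏ k ∈ Finset.range (t.depth n), ((C (t.depth n - 1 - k) : ℝ))⁻¹ := by
    unfold Policy.pathProb
    apply Finset.prod_congr rfl
    intro k hk
    rw [Finset.mem_range] at hk
    have hne : t.par^[k] n ≠ t.root := by
      intro h
      have := (aux_depth_eq_zero t).2 h
      rw [aux_depth_iterate t (Nat.le_of_lt hk)] at this
      omega
    have hc : t.par^[k] n ∈ t.children (t.par^[k+1] n) := by
      rw [Function.iterate_succ_apply']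
      exact aux_mem_children t hne
    rw [hunif _ _ hc, hcard, aux_depth_iterate t hk]
    have : t.depth n - (k + 1) = t.depth n - 1 - k := by omega
    rw [this]
  rw [hP, Finset.prod_range_reflect (fun j => ((C j : ℝ))⁻¹)]
  simp

end Aux

/-- if the number of children of every node depends only on its depth via
`C : ℕ → ℕ` with `C(k) ≥ 1`, and the policy is uniform (`π(m | n) = 1/|C(n)|` for every
child `m` of `n`), then `Λ(n)` equals the number of nodes of depth at most `d(n)`. -/
theorem stmt19 {N : Type*} (t : ParentTree N) (hfin : ∀ n : N, (t.children n).Finite)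
    (P : Policy t) (C : ℕ → ℕ) (hC : ∀ k : ℕ, 1 ≤ C k)
    (hcard : ∀ n : N, (t.children n).ncard = C (t.depth n))
    (hunif : ∀ n : N, ∀ m ∈ t.children n, P.cond m = (((t.children n).ncard : ℝ))⁻¹) :
    ∀ n : N, P.slend n = ({m : N | t.depth m ≤ t.depth n}.ncard : ℝ) := by
  classical
  intro n
  have hL : P.slend n = ∑ k ∈ Finset.range (t.depth n + 1), ∏ j ∈ Finset.range k, (C j : ℝ) := by
    unfold Policy.slend
    have h1 : ∀ k ∈ Finset.range (t.depth n + 1),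
        (P.pathProb (t.par^[k] n))⁻¹ = ∏ j ∈ Finset.range (t.depth n - k), (C j : ℝ) := by
      intro k hk
      rw [Finset.mem_range] at hk
      rw [aux_pathProb t P C hcard hunif, aux_depth_iterate t (by omega)]
    rw [Finset.sum_congr rfl h1]
    have h2 := Finset.sum_range_reflect (fun i => ∏ j ∈ Finset.range i, (C j : ℝ))
      (t.depth n + 1)
    simpa using h2
  have hdisj : ∀ x ∈ Finset.range (t.depth n + 1), ∀ y ∈ Finset.range (t.depth n + 1),
      x ≠ y → Disjoint ((aux_card_depth t hfin C hcard x).1.toFinset)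
        ((aux_card_depth t hfin C hcard y).1.toFinset) := by
    intro x _ y _ hxy
    rw [Finset.disjoint_left]
    intro a ha hay
    rw [Set.Finite.mem_toFinset] at ha hay
    exact hxy (ha ▸ hay ▸ rfl)
  have hR : {m : N | t.depth m ≤ t.depth n} =
      ↑((Finset.range (t.depth n + 1)).biUnion fun k =>
        (aux_card_depth t hfin C hcard k).1.toFinset) := by
    ext m
    simp only [Set.mem_setOf_eq, Finset.coe_biUnion, Set.mem_iUnion, Finset.mem_coe,
      Finset.mem_biUnion, Finset.mem_range, Set.Finite.mem_toFinset, Set.mem_setOf_eq,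
      Nat.lt_succ_iff]
    constructor
    · intro h; exact ⟨t.depth m, h, rfl⟩
    · rintro ⟨k, hk, rfl⟩; exact hk
  rw [hL, hR, Set.ncard_coe_finset, Finset.card_biUnion hdisj]
  push_cast
  apply Finset.sum_congr rfl
  intro k _
  rw [← Set.ncard_eq_toFinset_card _ (aux_card_depth t hfin C hcard k).1,
    (aux_card_depth t hfin C hcard k).2]
  push_cast
  rfl
end
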